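/- arXiv:1701.08597 — 5 statements merged into one kernel-verified Lean document; each statement's English description precedes it below -/
import Mathlib

section
/- If τ : M_n(ℂ) → M_n(ℂ) satisfies τ(e_j e_j^*) = e_j e_j^* for all standard basis vectors e_j, τ(αA) = \overline{α} τ(A) for all α ∈ ℂ, τ(T A T^{-1}) = T τ(A) T^{-1} for all invertible T, and τ(A+B) = τ(A) + τ(B) whenever A and B commute, then for every diagonal matrix D = diag(λ_1,…,λ_n) one has τ(D) = \overline{D} = diag(\overline{λ_1},…,\overline{λ_n}). -/
open Matrix Polynomial
open scoped ComplexConjugate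

noncomputable section

/-- `B` is the conjugate `A^c` of `A`, defined via a Jordan-type decomposition
`A = T (D + N) T⁻¹` with `D` diagonal, `N` nilpotent commuting with `D`,
by `A^c = T ⬝ \overline{D} ⬝ T⁻¹`. -/
def Matrix.IsJordanConj {n : Type*} [Fintype n] [DecidableEq n]
    (A B : Matrix n n ℂ) : Prop :=
  ∃ T D N : Matrix n n ℂ, IsUnit T ∧ D.IsDiag ∧ IsNilpotent N ∧ D * N = N * D ∧
    A = T * (D + N) * T⁻¹ ∧ B = T * D.map (starRingEnd ℂ) * T⁻¹

lemma diagonal_single_eq {n : ℕ} (j : Fin n) (c : ℂ) :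
    Matrix.diagonal (Pi.single j c) = c • Matrix.single j j 1 := by
  ext i k
  by_cases hik : i = k
  · subst hik
    by_cases hij : j = i
    · subst hij; simp [Matrix.single, Pi.single_apply]
    · simp [Matrix.single, Pi.single_apply, hij,
        fun h : i = j => hij h.symm]
  · have hjik : ¬(j = i ∧ j = k) := by rintro ⟨rfl, rfl⟩; exact hik rfl
    simp [Matrix.diagonal_apply_ne _ hik, Matrix.single, hjik]

lemma diagAdd {n : ℕ} (f g : Fin n → ℂ) :
    Matrix.diagonal (f + g) = Matrix.diagonal f + Matrix.diagonal g := by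
  ext i k
  by_cases h : i = k <;> simp [h]

/-- Requirements (2.10)-(2.13) force `τ(D) = \overline{D}` for every diagonal `D`. -/
theorem tau_diagonal {n : ℕ} (τ : Matrix (Fin n) (Fin n) ℂ → Matrix (Fin n) (Fin n) ℂ)
    (h1 : ∀ j : Fin n, τ (Matrix.single j j 1) = Matrix.single j j 1)
    (h2 : ∀ (α : ℂ) (A : Matrix (Fin n) (Fin n) ℂ), τ (α • A) = (starRingEnd ℂ α) • τ A)
    (h3 : ∀ (T A : Matrix (Fin n) (Fin n) ℂ), IsUnit T → τ (T * A * T⁻¹) = T * τ A * T⁻¹)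
    (h4 : ∀ A B : Matrix (Fin n) (Fin n) ℂ, A * B = B * A → τ (A + B) = τ A + τ B)
    (d : Fin n → ℂ) :
    τ (Matrix.diagonal d) = Matrix.diagonal (fun i => starRingEnd ℂ (d i)) := by
  have hτ0 : τ 0 = 0 := by
    have := h4 0 0 (by simp)
    simpa using this.symm
  have key : ∀ s : Finset (Fin n), ∀ f : Fin n → ℂ,
      τ (Matrix.diagonal (∑ j ∈ s, Pi.single j (f j))) =
        Matrix.diagonal (∑ j ∈ s, Pi.single j (starRingEnd ℂ (f j))) := by
    intro s
    induction s using Finset.induction_on with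
    | empty =>
      intro f
      have h0 : Matrix.diagonal (0 : Fin n → ℂ) = 0 := by
        ext i k; by_cases h : i = k <;> simp [h]
      simp only [Finset.sum_empty, h0, hτ0]
    | insert _ _ hj ih =>
      rename_i a s
      intro f
      rw [Finset.sum_insert hj, Finset.sum_insert hj, diagAdd, diagAdd]
      have hcomm : Matrix.diagonal (Pi.single a (f a)) *
          Matrix.diagonal (∑ x ∈ s, Pi.single x (f x)) =
          Matrix.diagonal (∑ x ∈ s, Pi.single x (f x)) *
          Matrix.diagonal (Pi.single a (f a)) := by
        rw [Matrix.diagonal_mul_diagonal, Matrix.diagonal_mul_diagonal]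
        exact congrArg Matrix.diagonal (funext fun i => mul_comm _ _)
      rw [h4 _ _ hcomm, ih f]
      congr 1
      rw [diagonal_single_eq, diagonal_single_eq, h2, h1]
  have hd : d = ∑ j, Pi.single j (d j) := (Finset.univ_sum_single d).symm
  have := key Finset.univ d
  rw [← hd] at this
  have hsum : (∑ j : Fin n, Pi.single j (starRingEnd ℂ (d j))) =
      fun i => starRingEnd ℂ (d i) := by
    funext i
    rw [Finset.sum_apply]
    simp [Pi.single_apply]
  rw [this, hsum]
end
end

section
/- For a rank-one matrix R = u v^* with v^* u ≠ 0, the conjugate is R^c = (\overline{v^* u}/(v^* u)) u v^*; if v^* u = 0 and u, v are nonzero, then R^c = 0. -/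
open Matrix Polynomial
open scoped ComplexConjugate

noncomputable section

/-- If `N` is nilpotent, `C` commutes with `N`, and `N = C * N ^ 2`, then `N = 0`. -/
lemma aux_nilp_zero {A : Type*} [Ring A] {N C : A} (hN : IsNilpotent N)
    (hc : Commute C N) (h : N = C * N ^ 2) : N = 0 := by
  obtain ⟨m, hm⟩ := hN
  have key : ∀ k, N = C ^ k * N ^ (k + 1) := by
    intro k
    induction k with
    | zero => simp
    | succ k ih =>
      have hck : C * N ^ k = N ^ k * C := (hc.pow_right k).eq
      calc N = C ^ k * N ^ (k + 1) := ih
        _ = C ^ k * (N ^ k * N) := by rw [pow_succ]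
        _ = C ^ k * (N ^ k * (C * N ^ 2)) := by rw [← h]
        _ = C ^ k * ((C * N ^ k) * N ^ 2) := by rw [hck, mul_assoc]
        _ = C ^ (k + 1) * N ^ (k + 1 + 1) := by
            rw [pow_succ C k, pow_succ N (k + 1), pow_succ N k, sq]
            rw [mul_assoc, mul_assoc, mul_assoc]
  have := key m
  rw [pow_succ, hm, zero_mul, mul_zero] at this
  exact this

/-- A diagonal nilpotent matrix is zero. -/
lemma aux_diag_nilp_zero {n : Type*} [Fintype n] [DecidableEq n]
    {D : Matrix n n ℂ} (hD : D.IsDiag) (hN : IsNilpotent D) : D = 0 := by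
  have hdd : D = Matrix.diagonal (fun i => D i i) := by
    ext i j
    by_cases h : i = j
    · subst h; simp
    · simp [Matrix.diagonal_apply_ne _ h, hD h]
  obtain ⟨m, hm⟩ := hN
  have hm' : D ^ (m + 1) = 0 := by rw [pow_succ, hm, zero_mul]
  rw [hdd, Matrix.diagonal_pow] at hm'
  rw [hdd]
  have hz : ∀ i, (D i i) ^ (m + 1) = 0 := by
    intro i
    have := congrFun (congrFun hm' i) i
    simpa [Matrix.diagonal_apply_eq] using this
  ext i j
  by_cases h : i = j
  · subst h
    simp only [Matrix.diagonal_apply_eq, Matrix.zero_apply]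
    exact pow_eq_zero_iff (Nat.succ_ne_zero m) |>.mp (hz i)
  · simp [Matrix.diagonal_apply_ne _ h]

/-- The conjugate of a rank-one matrix `R = u v^*`. -/
theorem conj_rank_one {n : ℕ} (u v : Fin n → ℂ) (hu : u ≠ 0) (hv : v ≠ 0)
    (R : Matrix (Fin n) (Fin n) ℂ)
    (hR : R = Matrix.vecMulVec u (fun j => conj (v j)))
    (B : Matrix (Fin n) (Fin n) ℂ) (hB : Matrix.IsJordanConj R B) :
    ((∑ i, conj (v i) * u i) ≠ 0 →
      B = ((conj (∑ i, conj (v i) * u i)) / (∑ i, conj (v i) * u i)) • R) ∧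
    ((∑ i, conj (v i) * u i) = 0 → B = 0) := by
  obtain ⟨T, D, N, hT, hD, hN, hDN, hA, hBeq⟩ := hB
  set α : ℂ := ∑ i, conj (v i) * u i with hα
  have hTdet : IsUnit T.det := (Matrix.isUnit_iff_isUnit_det T).mp hT
  have hTT : T⁻¹ * T = 1 := Matrix.nonsing_inv_mul T hTdet
  -- R ^ 2 = α • R
  have hR2 : R * R = α • R := by
    rw [hR]
    ext i j
    simp only [Matrix.mul_apply, Matrix.vecMulVec_apply, Matrix.smul_apply, smul_eq_mul, hα,
      Finset.sum_mul]
    apply Finset.sum_congr rfl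
    intro k _
    ring
  -- transfer to M := D + N
  have cancel : ∀ X Y : Matrix (Fin n) (Fin n) ℂ, T * X * T⁻¹ = T * Y * T⁻¹ → X = Y := by
    intro X Y h
    have h2 := congrArg (fun Z => T⁻¹ * Z * T) h
    simp only [Matrix.mul_assoc] at h2
    rw [← Matrix.mul_assoc T⁻¹ T, hTT, Matrix.one_mul, ← Matrix.mul_assoc T⁻¹ T, hTT,
      Matrix.one_mul] at h2
    simpa using h2
  have conjmul : ∀ X Y : Matrix (Fin n) (Fin n) ℂ,
      (T * X * T⁻¹) * (T * Y * T⁻¹) = T * (X * Y) * T⁻¹ := by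
    intro X Y
    simp only [Matrix.mul_assoc]
    rw [← Matrix.mul_assoc T⁻¹ T, hTT, Matrix.one_mul]
  have hM2 : (D + N) * (D + N) = α • (D + N) := by
    apply cancel
    rw [← conjmul, ← hA, hR2, hA, Matrix.mul_smul, Matrix.smul_mul]
  -- expand
  have h1 : D * D + D * N + N * D + N * N = α • D + α • N := by
    rw [← smul_add, ← hM2, Matrix.add_mul, Matrix.mul_add, Matrix.mul_add]
    abel
  have hEF : D * D - α • D = α • N - (D * N + N * D + N * N) := by
    rw [sub_eq_sub_iff_add_eq_add]
    abel_nf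
    abel_nf at h1
    linear_combination (norm := abel) h1
  set S : Matrix (Fin n) (Fin n) ℂ := α • (1 : Matrix (Fin n) (Fin n) ℂ) - (2 : ℂ) • D with hSdef
  have hF : α • N - (D * N + N * D + N * N) = (S - N) * N := by
    rw [← hDN, hSdef, Matrix.sub_mul, Matrix.sub_mul, Matrix.smul_mul, Matrix.smul_mul,
      Matrix.one_mul, two_smul]
    abel
  have hcommDN : Commute D N := hDN
  have hcommSN : Commute S N := ((Commute.one_left N).smul_left α).sub_left (hcommDN.smul_left 2)
  have hFnil : IsNilpotent ((S - N) * N) :=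
    Commute.isNilpotent_mul_left (hcommSN.sub_left (Commute.refl N)) hN
  have hEdiag : (D * D - α • D).IsDiag := by
    intro i j hij
    have h2 : (D * D) i j = 0 := by
      rw [Matrix.mul_apply]
      apply Finset.sum_eq_zero
      intro k _
      by_cases hk : i = k
      · subst hk; rw [hD hij, mul_zero]
      · rw [hD hk, zero_mul]
    simp [Matrix.sub_apply, h2, Matrix.smul_apply, hD hij]
  have hE0 : D * D - α • D = 0 := by
    apply aux_diag_nilp_zero hEdiag
    rw [hEF, hF]; exact hFnil
  have hDD : D * D = α • D := sub_eq_zero.mp hE0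
  have hF0 : (S - N) * N = 0 := by rw [← hF, ← hEF, hE0]
  have hNsq : N * N = S * N := by
    rw [Matrix.sub_mul] at hF0
    have := sub_eq_zero.mp hF0
    exact this.symm
  have hSS : S * S = (α ^ 2) • (1 : Matrix (Fin n) (Fin n) ℂ) := by
    simp only [hSdef, Matrix.sub_mul, Matrix.mul_sub, Matrix.smul_mul, Matrix.mul_smul,
      Matrix.one_mul, Matrix.mul_one, smul_smul, hDD]
    module
  constructor
  · intro hne
    have hα2 : (α ^ 2) ≠ 0 := pow_ne_zero _ hne
    set C : Matrix (Fin n) (Fin n) ℂ := (α ^ 2)⁻¹ • S with hCdef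
    have hCN : Commute C N := hcommSN.smul_left _
    have hNC : N = C * N ^ 2 := by
      calc N = ((α ^ 2)⁻¹ • (S * S)) * N := by
              rw [hSS, smul_smul, inv_mul_cancel₀ hα2, one_smul, Matrix.one_mul]
        _ = C * (S * N) := by rw [← Matrix.smul_mul, hCdef, Matrix.mul_assoc]
        _ = C * N ^ 2 := by rw [← hNsq, sq]
    have hN0 : N = 0 := aux_nilp_zero hN hCN hNC
    have hDentry : ∀ i, D i i * D i i = α * D i i := by
      intro i
      have h2 := congrFun (congrFun hDD i) i
      rw [Matrix.mul_apply, Finset.sum_eq_single i] at h2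
      · simpa using h2
      · intro k _ hk
        rw [hD (Ne.symm hk), zero_mul]
      · intro h; exact absurd (Finset.mem_univ i) h
    have hmap : D.map (starRingEnd ℂ) = (conj α / α) • D := by
      ext i j
      by_cases h : i = j
      · subst h
        simp only [Matrix.map_apply, Matrix.smul_apply, smul_eq_mul]
        rcases eq_or_ne (D i i) 0 with h0 | h0
        · rw [h0]; simp
        · have hαD : D i i = α := mul_right_cancel₀ h0 (hDentry i)
          rw [hαD]
          exact (div_mul_cancel₀ _ hne).symm
      · simp [Matrix.map_apply, hD h]
    rw [hBeq, hmap, hA, hN0, add_zero]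
    rw [Matrix.mul_smul, Matrix.smul_mul]
  · intro hz
    rw [hz, zero_smul] at hM2
    have hDNnil : IsNilpotent (D + N) := ⟨2, by rw [sq]; exact hM2⟩
    have hcomm : Commute (D + N) N := (hcommDN).add_left (Commute.refl N)
    have hDnil : IsNilpotent D := by
      have := Commute.isNilpotent_sub hcomm hDNnil hN
      simpa using this
    have hD0 : D = 0 := aux_diag_nilp_zero hD hDnil
    rw [hBeq, hD0]
    simp
end
end

section
/- If A ∈ M_n(ℂ) is nonsingular, then (A^c)^{-1} = (A^{-1})^c. -/
open Matrix Polynomial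
open scoped ComplexConjugate

noncomputable section

private lemma commute_nonsing_inv {m : Type*} [Fintype m] [DecidableEq m]
    {M X : Matrix m m ℂ} (hM : IsUnit M) (hc : Commute X M) : Commute X M⁻¹ := by
  rw [← hM.unit_spec] at hc ⊢
  rw [← Matrix.coe_units_inv]
  exact hc.units_inv_right

private lemma conj_inv_eq {m : Type*} [Fintype m] [DecidableEq m]
    {T : Matrix m m ℂ} (hT : IsUnit T) (M : Matrix m m ℂ) :
    (T * M * T⁻¹)⁻¹ = T * M⁻¹ * T⁻¹ := by
  rw [Matrix.mul_inv_rev, Matrix.mul_inv_rev,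
    Matrix.nonsing_inv_nonsing_inv _ ((Matrix.isUnit_iff_isUnit_det _).mp hT), mul_assoc]

/-- Conjugation commutes with inversion: `(A^c)⁻¹ = (A⁻¹)^c`. -/
theorem conjugate_inv {n : ℕ} (A Ac : Matrix (Fin n) (Fin n) ℂ) (hA : IsUnit A)
    (h : Matrix.IsJordanConj A Ac) :
    Matrix.IsJordanConj A⁻¹ Ac⁻¹ := by
  obtain ⟨T, D, N, hT, hD, hN, hDN, hAeq, hAc⟩ := h
  have hTdet : IsUnit T.det := (Matrix.isUnit_iff_isUnit_det T).mp hT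
  have hTT : T * T⁻¹ = 1 := Matrix.mul_nonsing_inv T hTdet
  have hTT' : T⁻¹ * T = 1 := Matrix.nonsing_inv_mul T hTdet
  have hTinv : IsUnit (T⁻¹ : Matrix (Fin n) (Fin n) ℂ) :=
    (Matrix.isUnit_iff_isUnit_det _).mpr (Matrix.isUnit_nonsing_inv_det _ hTdet)
  -- `D + N` is a unit
  have hMeq : D + N = T⁻¹ * A * T := by
    rw [hAeq, mul_assoc T⁻¹, Matrix.nonsing_inv_mul_cancel_right _ _ hTdet,
      Matrix.nonsing_inv_mul_cancel_left _ _ hTdet]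
  have hM : IsUnit (D + N) := by
    rw [hMeq]; exact (hTinv.mul hA).mul hT
  -- `D` is a unit
  have cND : Commute N D := hDN.symm
  have cNM : Commute N (D + N) := (Commute.add_right cND (Commute.refl N))
  have hDunit : IsUnit D := by
    have := (IsNilpotent.neg hN).isUnit_add_left_of_commute hM cNM.neg_left
    simpa using this
  have hDdet : IsUnit D.det := (Matrix.isUnit_iff_isUnit_det D).mp hDunit
  have hMdet : IsUnit (D + N).det := (Matrix.isUnit_iff_isUnit_det _).mp hM
  -- commutation facts with inverses
  have cNMinv : Commute N (D + N)⁻¹ := commute_nonsing_inv hM cNM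
  have cNDinv : Commute N D⁻¹ := commute_nonsing_inv hDunit cND
  have cDinvMinv : Commute D⁻¹ (D + N)⁻¹ :=
    (commute_nonsing_inv hDunit
      ((commute_nonsing_inv hM ((Commute.refl D).add_right (hDN : Commute D N))).symm)).symm
  -- key algebraic identity
  have key : (D + N)⁻¹ - D⁻¹ = -(D⁻¹ * N * (D + N)⁻¹) := by
    have : D⁻¹ * N * (D + N)⁻¹ = D⁻¹ * ((D + N) - D) * (D + N)⁻¹ := by
      congr 1; congr 1; simp
    rw [this, Matrix.mul_sub, Matrix.sub_mul, mul_assoc,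
      Matrix.mul_nonsing_inv _ hMdet, mul_one, Matrix.nonsing_inv_mul _ hDdet, one_mul]
    abel
  refine ⟨T, D⁻¹, (D + N)⁻¹ - D⁻¹, hT, ?_, ?_, ?_, ?_, ?_⟩
  · rw [← hD.diagonal_diag, Matrix.inv_diagonal]
    exact Matrix.isDiag_diagonal _
  · rw [key, mul_assoc]
    have h1 : IsNilpotent (N * (D + N)⁻¹) := cNMinv.isNilpotent_mul_right hN
    have h2 : Commute D⁻¹ (N * (D + N)⁻¹) := Commute.mul_right cNDinv.symm cDinvMinv
    exact (h2.isNilpotent_mul_left h1).neg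
  · rw [key]
    have : Commute D⁻¹ (-(D⁻¹ * N * (D + N)⁻¹)) :=
      ((Commute.mul_right (Commute.mul_right (Commute.refl D⁻¹) cNDinv.symm)
        cDinvMinv)).neg_right
    exact this
  · rw [hAeq, conj_inv_eq hT]
    congr 1
    congr 1
    abel
  · have hconjinv : (D.map (starRingEnd ℂ))⁻¹ = (D⁻¹).map (starRingEnd ℂ) := by
      apply Matrix.inv_eq_right_inv
      rw [← Matrix.map_mul, Matrix.mul_nonsing_inv _ hDdet,
        Matrix.map_one _ (map_zero _) (map_one _)]
    rw [hAc, conj_inv_eq hT, hconjinv]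
end
end

section
/- The conjugate A^c of A ∈ M_n(ℂ) is always a diagonalizable matrix, and A^{cc} := (A^c)^c equals A if and only if A is diagonalizable. -/
open Matrix Polynomial
open scoped ComplexConjugate

noncomputable section

section Aux

variable {m : Type*} [Fintype m] [DecidableEq m]

private lemma pow_conj {T : Matrix m m ℂ} (hT : IsUnit T) (X : Matrix m m ℂ) (k : ℕ) :
    (T * X * T⁻¹) ^ k = T * X ^ k * T⁻¹ := by
  have hdet := (Matrix.isUnit_iff_isUnit_det T).mp hT
  induction k with
  | zero => simp [Matrix.mul_nonsing_inv T hdet]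
  | succ k ih =>
    rw [pow_succ, pow_succ, ih, mul_assoc (T * X ^ k), mul_assoc T X,
      ← mul_assoc (T⁻¹), Matrix.nonsing_inv_mul T hdet, one_mul, ← mul_assoc, ← mul_assoc,
      mul_assoc (T * X ^ k)]

private lemma conjMulConj {T : Matrix m m ℂ} (hT : IsUnit T) (X Y : Matrix m m ℂ) :
    (T * X * T⁻¹) * (T * Y * T⁻¹) = T * (X * Y) * T⁻¹ := by
  have hdet := (Matrix.isUnit_iff_isUnit_det T).mp hT
  have hinv : T⁻¹ * T = 1 := Matrix.nonsing_inv_mul T hdet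
  simp only [mul_assoc]
  rw [← mul_assoc T⁻¹ T, hinv, one_mul]

private lemma aeval_conj {T : Matrix m m ℂ} (hT : IsUnit T) (X : Matrix m m ℂ) (p : ℂ[X]) :
    aeval (T * X * T⁻¹) p = T * aeval X p * T⁻¹ := by
  induction p using Polynomial.induction_on' with
  | add p q hp hq => rw [map_add, map_add, hp, hq, mul_add, add_mul]
  | monomial k a =>
    rw [aeval_monomial, aeval_monomial, pow_conj hT, ← mul_assoc, ← mul_assoc,
      Algebra.commutes]
    simp only [mul_assoc]

private lemma aeval_diagonal (d : m → ℂ) (p : ℂ[X]) :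
    aeval (Matrix.diagonal d) p = Matrix.diagonal (fun i => p.eval (d i)) := by
  induction p using Polynomial.induction_on' with
  | add p q hp hq =>
    rw [map_add, hp, hq, Matrix.diagonal_add]
    ext i j; simp
  | monomial k a =>
    rw [aeval_monomial, Matrix.algebraMap_eq_diagonal, Matrix.diagonal_pow,
      Matrix.diagonal_mul_diagonal]
    ext i j; simp

private lemma conj_eq_zero {T X : Matrix m m ℂ} (hT : IsUnit T)
    (h : T * X * T⁻¹ = 0) : X = 0 := by
  have hdet := (Matrix.isUnit_iff_isUnit_det T).mp hT
  have h2 : T⁻¹ * (T * X * T⁻¹) * T = 0 := by rw [h, mul_zero, zero_mul]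
  rwa [← mul_assoc, ← mul_assoc, Matrix.nonsing_inv_mul T hdet, one_mul, mul_assoc,
    Matrix.nonsing_inv_mul T hdet, mul_one] at h2

end Aux

private lemma isSemisimple_of_diagonalizable {n : ℕ} {A T D : Matrix (Fin n) (Fin n) ℂ}
    (hT : IsUnit T) (hD : D.IsDiag) (hA : A = T * D * T⁻¹) :
    Module.End.IsSemisimple (Matrix.toLinAlgEquiv' A) := by
  set s : Finset ℂ := Finset.image D.diag Finset.univ with hs
  set p : ℂ[X] := ∏ μ ∈ s, (X - C μ) with hp
  have hsq : Squarefree p := by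
    refine (Polynomial.separable_prod_X_sub_C_iff'.mpr ?_).squarefree
    exact fun i _ j _ h => h
  have h0 : aeval A p = 0 := by
    rw [hA, ← hD.diagonal_diag, aeval_conj hT, aeval_diagonal]
    have heval : ∀ i : Fin n, Polynomial.eval (D i i) p = 0 := by
      intro i
      rw [hp, Polynomial.eval_prod]
      refine Finset.prod_eq_zero
        (Finset.mem_image_of_mem D.diag (Finset.mem_univ i)) ?_
      simp
    simp [heval]
  refine Module.End.isSemisimple_of_squarefree_aeval_eq_zero hsq ?_
  have h1 := Polynomial.aeval_algHom_apply
    (Matrix.toLinAlgEquiv' (R := ℂ) (n := Fin n)).toAlgHom A p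
  change aeval (Matrix.toLinAlgEquiv' A) p = Matrix.toLinAlgEquiv' (aeval A p) at h1
  rw [h1, h0, map_zero]

/-- Uniqueness of the semisimple part: if `T (D + N) T⁻¹` is diagonalizable then `N = 0`. -/
private lemma nilpotent_part_eq_zero {n : ℕ} {T D N U F : Matrix (Fin n) (Fin n) ℂ}
    (hT : IsUnit T) (hD : D.IsDiag) (hN : IsNilpotent N) (hDN : D * N = N * D)
    (hU : IsUnit U) (hF : F.IsDiag)
    (hA : T * (D + N) * T⁻¹ = U * F * U⁻¹) : N = 0 := by
  set A : Matrix (Fin n) (Fin n) ℂ := T * (D + N) * T⁻¹ with hAdef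
  set Y : Matrix (Fin n) (Fin n) ℂ := T * D * T⁻¹ with hY
  set Z : Matrix (Fin n) (Fin n) ℂ := T * N * T⁻¹ with hZ
  have hsplit : A = Y + Z := by rw [hAdef, hY, hZ, mul_add, add_mul]
  have hcomm : Y * Z = Z * Y := by
    rw [hY, hZ, conjMulConj hT, conjMulConj hT, hDN]
  have hZnil : IsNilpotent Z := by
    obtain ⟨k, hk⟩ := hN
    exact ⟨k, by rw [hZ, pow_conj hT, hk, mul_zero, zero_mul]⟩
  set e := Matrix.toLinAlgEquiv' (R := ℂ) (n := Fin n) with he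
  have hAss : Module.End.IsSemisimple (e A) := isSemisimple_of_diagonalizable hU hF hA
  have hYss : Module.End.IsSemisimple (e Y) := isSemisimple_of_diagonalizable hT hD rfl
  have hcomm' : Commute (e A) (e Y) := by
    have hAY : A * Y = Y * A := by rw [hsplit, add_mul, mul_add, hcomm]
    simpa only [Commute, SemiconjBy, ← _root_.map_mul] using congrArg e hAY
  have hZss : Module.End.IsSemisimple (e Z) := by
    have heZ : e Z = e A - e Y := by rw [hsplit, map_add]; abel
    rw [heZ]
    exact Module.End.IsSemisimple.sub_of_commute hcomm' hAss hYss
  have hZ0 : e Z = 0 :=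
    Module.End.eq_zero_of_isNilpotent_isSemisimple (hZnil.map e.toAlgHom) hZss
  have hZ0' : Z = 0 := by
    have := congrArg e.symm hZ0
    simpa using this
  exact conj_eq_zero hT hZ0'

/-- `A^c` is always diagonalizable, and `A^{cc} = A` iff `A` is diagonalizable. -/
theorem conj_diagonalizable_and_involutive_iff {n : ℕ}
    (A Ac Acc : Matrix (Fin n) (Fin n) ℂ)
    (h : Matrix.IsJordanConj A Ac) (h2 : Matrix.IsJordanConj Ac Acc) :
    (∃ T D : Matrix (Fin n) (Fin n) ℂ, IsUnit T ∧ D.IsDiag ∧ Ac = T * D * T⁻¹) ∧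
    (Acc = A ↔ ∃ T D : Matrix (Fin n) (Fin n) ℂ, IsUnit T ∧ D.IsDiag ∧ A = T * D * T⁻¹) := by
  obtain ⟨T, D, N, hT, hD, hN, hDN, hA, hAc⟩ := h
  obtain ⟨S, E, M, hS, hE, hM, hEM, hAc2, hAcc⟩ := h2
  have hDbar : (D.map (starRingEnd ℂ)).IsDiag := hD.map (map_zero _)
  refine ⟨⟨T, D.map (starRingEnd ℂ), hT, hDbar, hAc⟩, ?_, ?_⟩
  · -- Acc = A → A diagonalizable
    intro hEq
    exact ⟨S, E.map (starRingEnd ℂ), hS, hE.map (map_zero _), by rw [← hEq, hAcc]⟩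
  · -- A diagonalizable → Acc = A
    rintro ⟨U, F, hU, hF, hAUF⟩
    have hN0 : N = 0 := nilpotent_part_eq_zero hT hD hN hDN hU hF (by rw [← hA, hAUF])
    have hA' : A = T * D * T⁻¹ := by rw [hA, hN0, add_zero]
    have hM0 : M = 0 :=
      nilpotent_part_eq_zero hS hE hM hEM hT hDbar (by rw [← hAc2, hAc])
    have hAc' : Ac = S * E * S⁻¹ := by rw [hAc2, hM0, add_zero]
    have hDmap : D.map (starRingEnd ℂ) = diagonal (fun i => conj (D.diag i)) := by
      conv_lhs => rw [← hD.diagonal_diag]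
      rw [Matrix.diagonal_map (map_zero _)]
    have hEmap : E.map (starRingEnd ℂ) = diagonal (fun i => conj (E.diag i)) := by
      conv_lhs => rw [← hE.diagonal_diag]
      rw [Matrix.diagonal_map (map_zero _)]
    set s : Finset ℂ :=
      Finset.image (fun i => conj (D.diag i)) Finset.univ ∪ Finset.image E.diag Finset.univ
      with hs
    set p : ℂ[X] := Lagrange.interpolate s id (fun z => conj z) with hp
    have hpv : ∀ z ∈ s, p.eval z = conj z := by
      intro z hz
      exact Lagrange.eval_interpolate_at_node _ (Set.injOn_id _) hz
    have key1 : aeval Ac p = A := by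
      rw [hAc, hDmap, aeval_conj hT, aeval_diagonal, hA']
      congr 1
      have : (fun i => p.eval (conj (D.diag i))) = D.diag := by
        funext i
        rw [hpv _ (Finset.mem_union_left _
          (Finset.mem_image_of_mem _ (Finset.mem_univ i)))]
        simp
      rw [this, hD.diagonal_diag]
    have key2 : aeval Ac p = Acc := by
      have hfun : (fun i => Polynomial.eval (E.diag i) p)
          = fun i => conj (E.diag i) := by
        funext i
        exact hpv _ (Finset.mem_union_right _
          (Finset.mem_image_of_mem _ (Finset.mem_univ i)))
      rw [hAc']
      conv_lhs => rw [← hE.diagonal_diag]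
      rw [aeval_conj hS, aeval_diagonal, hfun, hAcc, hEmap]
    rw [← key2, key1]
end
end

section
/- The map A ↦ A^c is discontinuous: for the matrices A(t,θ) = [[λ+te^{iθ}, γ],[0, λ-te^{iθ}]] with γ ≠ 0 and t > 0, the (1,2)-entry of A(t,θ)^c equals e^{-2iθ}γ, which depends on θ as t → 0, while the matrix A(0) = [[λ, γ],[0, λ]] has A(0)^c = \overline{λ} I with (1,2)-entry 0. -/
open Matrix Polynomial
open scoped ComplexConjugate

noncomputable section

private lemma nilp_trace {N : Matrix (Fin 2) (Fin 2) ℂ} (h : IsNilpotent N) : N.trace = 0 :=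
  (Matrix.isNilpotent_trace_of_isNilpotent h).eq_zero

private lemma nilp_det {N : Matrix (Fin 2) (Fin 2) ℂ} (h : IsNilpotent N) : N.det = 0 := by
  obtain ⟨k, hk⟩ := h
  have h2 : N.det ^ k = 0 := by
    rw [← Matrix.det_pow, hk]
    exact Matrix.det_zero
  exact (pow_eq_zero_iff'.mp h2).1

private lemma conj_unit_trace {T : Matrix (Fin 2) (Fin 2) ℂ} (hiT : T⁻¹ * T = 1)
    (M : Matrix (Fin 2) (Fin 2) ℂ) : (T * M * T⁻¹).trace = M.trace := by
  rw [Matrix.trace_mul_cycle, hiT, Matrix.one_mul]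

private lemma conj_unit_det {T : Matrix (Fin 2) (Fin 2) ℂ} (hiT : T⁻¹ * T = 1)
    (M : Matrix (Fin 2) (Fin 2) ℂ) : (T * M * T⁻¹).det = M.det := by
  have h1 : T⁻¹.det * T.det = 1 := by rw [← Matrix.det_mul, hiT, Matrix.det_one]
  rw [Matrix.det_mul, Matrix.det_mul]
  linear_combination M.det * h1

/-- The key structural lemma for `2 × 2` upper triangular matrices. -/
private lemma jordan_key (α β γ : ℂ) (B : Matrix (Fin 2) (Fin 2) ℂ)
    (h : Matrix.IsJordanConj !![α, γ; 0, β] B) :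
    (α ≠ β → B 0 1 = (starRingEnd ℂ α - starRingEnd ℂ β) / (α - β) * γ) ∧
    (α = β → B = (starRingEnd ℂ α) • 1) := by
  obtain ⟨T, D, N, hT, hDdiag, hNnil, hcomm, hA, hB⟩ := h
  have hdet : IsUnit T.det := (Matrix.isUnit_iff_isUnit_det T).mp hT
  have hTi : T * T⁻¹ = 1 := Matrix.mul_nonsing_inv T hdet
  have hiT : T⁻¹ * T = 1 := Matrix.nonsing_inv_mul T hdet
  have hD01 : D 0 1 = 0 := hDdiag (by decide)
  have hD10 : D 1 0 = 0 := hDdiag (by decide)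
  by_cases hd : D 0 0 = D 1 1
  · -- scalar diagonal case
    have hDs : D = D 0 0 • (1 : Matrix (Fin 2) (Fin 2) ℂ) := by
      ext i j
      fin_cases i <;> fin_cases j <;>
        simp [hD01, hD10, hd, Matrix.one_apply]
    have expand : T * (D 0 0 • (1 : Matrix (Fin 2) (Fin 2) ℂ) + N) * T⁻¹
        = D 0 0 • (1 : Matrix (Fin 2) (Fin 2) ℂ) + T * N * T⁻¹ := by
      rw [Matrix.mul_add, Matrix.add_mul]
      simp [mul_smul_comm, smul_mul_assoc, hTi]
    rw [hDs] at hA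
    have hA' : T * N * T⁻¹ = !![α, γ; 0, β] - D 0 0 • 1 := by
      rw [hA, expand, add_sub_cancel_left]
    have htrN := nilp_trace hNnil
    have hdtN := nilp_det hNnil
    have e1 : α + β - 2 * D 0 0 = 0 := by
      have h2 := congrArg Matrix.trace hA'
      rw [conj_unit_trace hiT, htrN] at h2
      simp [Matrix.trace_fin_two, Matrix.one_apply] at h2
      linear_combination -h2
    have e2 : α - D 0 0 = 0 ∨ β - D 0 0 = 0 := by
      have h2 := congrArg Matrix.det hA'
      rw [conj_unit_det hiT, hdtN, Matrix.det_fin_two] at h2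
      simpa [Matrix.one_apply] using h2
    constructor
    · intro hne
      exfalso
      rcases e2 with h' | h'
      · exact hne (by linear_combination -e1 + 2 * h')
      · exact hne (by linear_combination e1 - 2 * h')
    · intro heq
      have hd0 : D 0 0 = α := by linear_combination (-1/2 : ℂ) * e1 + (-1/2 : ℂ) * heq
      have hmap : D.map (starRingEnd ℂ) = (starRingEnd ℂ α) • (1 : Matrix (Fin 2) (Fin 2) ℂ) := by
        rw [hDs, hd0]
        ext i j
        fin_cases i <;> fin_cases j <;> simp [Matrix.one_apply]
      rw [hB, hmap]
      simp [mul_smul_comm, smul_mul_assoc, hTi]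
  · -- distinct diagonal case: N = 0
    have h01 : N 0 1 = 0 := by
      have h2 := congrFun (congrFun hcomm 0) 1
      simp [Matrix.mul_apply, Fin.sum_univ_two, hD01, hD10] at h2
      have h3 : (D 0 0 - D 1 1) * N 0 1 = 0 := by linear_combination h2
      exact (mul_eq_zero.mp h3).resolve_left (sub_ne_zero.2 hd)
    have h10 : N 1 0 = 0 := by
      have h2 := congrFun (congrFun hcomm 1) 0
      simp [Matrix.mul_apply, Fin.sum_univ_two, hD01, hD10] at h2
      have h3 : (D 0 0 - D 1 1) * N 1 0 = 0 := by linear_combination -h2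
      exact (mul_eq_zero.mp h3).resolve_left (sub_ne_zero.2 hd)
    have hsum : N 0 0 + N 1 1 = 0 := by
      have := nilp_trace hNnil
      simpa [Matrix.trace_fin_two] using this
    have hprod : N 0 0 * N 1 1 = 0 := by
      have := nilp_det hNnil
      rw [Matrix.det_fin_two, h01] at this
      linear_combination this
    have h00 : N 0 0 = 0 := by
      rcases mul_eq_zero.mp hprod with h' | h'
      · exact h'
      · linear_combination hsum - h'
    have h11 : N 1 1 = 0 := by linear_combination hsum - h00
    have hN : N = 0 := by
      ext i j
      fin_cases i <;> fin_cases j <;> simp [h00, h01, h10, h11]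
    have hA' : !![α, γ; 0, β] = T * D * T⁻¹ := by rw [hA, hN, add_zero]
    have e1 : α + β = D 0 0 + D 1 1 := by
      have h2 := congrArg Matrix.trace hA'
      rw [conj_unit_trace hiT] at h2
      simpa [Matrix.trace_fin_two] using h2
    have e2 : α * β = D 0 0 * D 1 1 := by
      have h2 := congrArg Matrix.det hA'
      rw [conj_unit_det hiT, Matrix.det_fin_two, Matrix.det_fin_two] at h2
      simp [hD01, hD10] at h2
      linear_combination h2
    have hroots : (α = D 0 0 ∧ β = D 1 1) ∨ (α = D 1 1 ∧ β = D 0 0) := by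
      have hq : (α - D 0 0) * (α - D 1 1) = 0 := by
        linear_combination α * e1 - e2
      rcases mul_eq_zero.mp hq with h' | h'
      · left
        constructor
        · linear_combination h'
        · linear_combination e1 - h'
      · right
        constructor
        · linear_combination h'
        · linear_combination e1 - h'
    set c : ℂ := (starRingEnd ℂ (D 0 0) - starRingEnd ℂ (D 1 1)) / (D 0 0 - D 1 1) with hc
    set e : ℂ := (starRingEnd ℂ (D 1 1) * D 0 0 - starRingEnd ℂ (D 0 0) * D 1 1)
      / (D 0 0 - D 1 1) with he
    have hdd : D 0 0 - D 1 1 ≠ 0 := sub_ne_zero.2 hd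
    have hDbar : D.map (starRingEnd ℂ) = c • D + e • (1 : Matrix (Fin 2) (Fin 2) ℂ) := by
      ext i j
      fin_cases i <;> fin_cases j <;>
        simp [Matrix.map_apply, hD01, hD10, Matrix.one_apply, hc, he] <;>
        field_simp <;> ring
    have hBeq : B = c • !![α, γ; 0, β] + e • (1 : Matrix (Fin 2) (Fin 2) ℂ) := by
      rw [hB, hDbar, Matrix.mul_add, Matrix.add_mul, hA']
      simp [mul_smul_comm, smul_mul_assoc, hTi]
    constructor
    · intro hne
      have hB01 : B 0 1 = c * γ := by
        rw [hBeq]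
        simp [Matrix.one_apply]
      rw [hB01, hc]
      rcases hroots with ⟨h1, h2⟩ | ⟨h1, h2⟩
      · rw [← h1, ← h2]
      · rw [← h1, ← h2]
        have hne1 : β - α ≠ 0 := sub_ne_zero.2 (Ne.symm hne)
        have hne2 : α - β ≠ 0 := sub_ne_zero.2 hne
        field_simp
        ring
    · intro heq
      exfalso
      rcases hroots with ⟨h1, h2⟩ | ⟨h1, h2⟩
      · exact hd (by rw [← h1, ← h2, heq])
      · exact hd (by rw [← h1, ← h2, heq])

/-- Discontinuity of `A ↦ A^c`: the corner entry of `A(t,θ)^c` equals `e^{-2iθ}γ`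
for `t > 0`, while `A(0)^c = \overline{λ} I` has vanishing corner entry. -/
theorem conj_discontinuous (lam γ : ℂ) (hγ : γ ≠ 0) (θ : ℝ) :
    (∀ t : ℝ, 0 < t → ∀ B : Matrix (Fin 2) (Fin 2) ℂ,
      Matrix.IsJordanConj
        !![lam + (t : ℂ) * Complex.exp (θ * Complex.I), γ;
           0, lam - (t : ℂ) * Complex.exp (θ * Complex.I)] B →
      B 0 1 = Complex.exp (-2 * θ * Complex.I) * γ) ∧
    (∀ B : Matrix (Fin 2) (Fin 2) ℂ,
      Matrix.IsJordanConj !![lam, γ; 0, lam] B →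
      B = (starRingEnd ℂ lam) • 1 ∧ B 0 1 = 0) := by
  constructor
  · intro t ht B hJ
    set x : ℂ := (t : ℂ) * Complex.exp (θ * Complex.I) with hx
    have hxne : x ≠ 0 := by
      apply mul_ne_zero
      · exact_mod_cast ht.ne'
      · exact Complex.exp_ne_zero _
    have hne : lam + x ≠ lam - x := by
      intro hcon
      apply hxne
      have : (2 : ℂ) * x = 0 := by linear_combination hcon
      have h2 : (2 : ℂ) ≠ 0 := two_ne_zero
      exact (mul_eq_zero.mp this).resolve_left h2
    have := (jordan_key (lam + x) (lam - x) γ B hJ).1 hne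
    rw [this]
    have hconjx : starRingEnd ℂ x = (t : ℂ) * Complex.exp (-(θ * Complex.I)) := by
      rw [hx, _root_.map_mul, Complex.conj_ofReal, ← Complex.exp_conj, _root_.map_mul,
        Complex.conj_ofReal, Complex.conj_I,
        show (θ : ℂ) * -Complex.I = -((θ : ℂ) * Complex.I) by ring]
    have hsub1 : starRingEnd ℂ (lam + x) - starRingEnd ℂ (lam - x)
        = 2 * (t : ℂ) * Complex.exp (-(θ * Complex.I)) := by
      rw [map_add, map_sub, hconjx]; ring
    have hsub2 : (lam + x) - (lam - x) = 2 * (t : ℂ) * Complex.exp (θ * Complex.I) := by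
      rw [hx]; ring
    rw [hsub1, hsub2]
    have h2t : (2 : ℂ) * (t : ℂ) * Complex.exp (θ * Complex.I) ≠ 0 := by
      apply mul_ne_zero (mul_ne_zero two_ne_zero (by exact_mod_cast ht.ne'))
        (Complex.exp_ne_zero _)
    rw [div_mul_eq_mul_div, div_eq_iff h2t]
    have hexp : Complex.exp (-2 * θ * Complex.I) * Complex.exp (θ * Complex.I)
        = Complex.exp (-(θ * Complex.I)) := by
      rw [← Complex.exp_add]
      congr 1
      ring
    linear_combination -2 * (t : ℂ) * γ * hexp
  · intro B hJ
    have hBeq := (jordan_key lam lam γ B hJ).2 rfl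
    refine ⟨hBeq, ?_⟩
    rw [hBeq]
    simp [Matrix.one_apply]
end
end
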